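/- Suppose (U^n) solves the implicit upwind scheme for linear advection with λ > 0, and let η : ℝ → ℝ be convex and nonnegative. Assume that for every n ∈ ℕ the sequence j ↦ η(U^n_j) is summable over ℤ. Then the discrete entropy does not increase in time: for every n ∈ ℕ, Σ_{j∈ℤ} η(U^n_j) ≤ Σ_{j∈ℤ} η(U^0_j). -/

import Mathlib

open scoped BigOperators

/-- The L1 coefficients `c^{n+1}_k` for the discrete Caputo derivative:
`c^{n+1}_0 = (n+1)^{1-α} - n^{1-α}` and, for `1 ≤ k ≤ n`,
`c^{n+1}_k = 2(n+1-k)^{1-α} - (n+2-k)^{1-α} - (n-k)^{1-α}`. -/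
noncomputable def caputoCoeff (α : ℝ) (n k : ℕ) : ℝ :=
  if k = 0 then ((n : ℝ) + 1) ^ (1 - α) - (n : ℝ) ^ (1 - α)
  else 2 * ((n : ℝ) + 1 - (k : ℝ)) ^ (1 - α) - ((n : ℝ) + 2 - (k : ℝ)) ^ (1 - α)
    - ((n : ℝ) - (k : ℝ)) ^ (1 - α)

/-- `U` solves the implicit upwind scheme for the linear advection equation
with flux `f(u) = a u`, `a > 0`, where `lam = a τ^α / (h Γ(2-α))`. -/
def SolvesImplicitAdvection (α lam : ℝ) (U : ℕ → ℤ → ℝ) : Prop :=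
  ∀ (n : ℕ) (j : ℤ),
    U (n + 1) j = (∑ k ∈ Finset.range (n + 1), caputoCoeff α n k * U k j)
      - lam * (U (n + 1) j - U (n + 1) (j - 1))

/-!
Rewritten as `(1 + λ) U^{n+1}_j = Σ_k c^{n+1}_k U^k_j + λ U^{n+1}_{j-1}`, the scheme expresses
`U^{n+1}_j` as a convex combination of the past values `U^k_j` and of its left neighbour
`U^{n+1}_{j-1}`, since the L1 coefficients are nonnegative (concavity of `x ↦ x^{1-α}`) and sum
to one (they telescope). Jensen's inequality then bounds `(1 + λ) η(U^{n+1}_j)`, and summing over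
`j ∈ ℤ`, where the shift `j ↦ j - 1` leaves the sum unchanged, gives
`E^{n+1} ≤ Σ_k c^{n+1}_k E^k` for the entropies `E^n = Σ_j η(U^n_j)`. Strong induction on `n`
finishes the proof.
-/

open Finset

theorem sum_caputoCoeff {α : ℝ} (hα : α ≠ 1) (n : ℕ) :
    ∑ k ∈ range (n + 1), caputoCoeff α n k = 1 := by
  set d : ℕ → ℝ := fun k => ((n : ℝ) + 1 - k) ^ (1 - α) - ((n : ℝ) - k) ^ (1 - α)
  have htelescope : ∀ i, caputoCoeff α n (i + 1) = d (i + 1) - d i := by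
    intro i
    simp only [caputoCoeff, d, if_neg i.succ_ne_zero, Nat.cast_add, Nat.cast_one]
    ring_nf
  rw [sum_range_succ', sum_congr rfl fun i _ => htelescope i, sum_range_sub]
  simp [d, caputoCoeff, Real.zero_rpow (sub_ne_zero.2 hα.symm)]

theorem caputoCoeff_nonneg {α : ℝ} (hα₀ : 0 ≤ α) (hα₁ : α ≤ 1) {n k : ℕ} (hk : k ≤ n) :
    0 ≤ caputoCoeff α n k := by
  rcases k.eq_zero_or_pos with rfl | hk₀
  · simp only [caputoCoeff, if_true, sub_nonneg]
    exact Real.rpow_le_rpow n.cast_nonneg (le_add_of_nonneg_right zero_le_one) (by linarith)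
  · have hkn : (k : ℝ) ≤ n := by exact_mod_cast hk
    have hmid : (1 / 2 : ℝ) * ((n : ℝ) - k) ^ (1 - α) + 1 / 2 * ((n : ℝ) + 2 - k) ^ (1 - α) ≤
        ((n : ℝ) + 1 - k) ^ (1 - α) := by
      have := (Real.concaveOn_rpow (p := 1 - α) (by linarith) (by linarith)).2
        (show (n : ℝ) - k ∈ Set.Ici 0 by simp [hkn])
        (show (n : ℝ) + 2 - k ∈ Set.Ici 0 by simp; linarith)
        (show (0 : ℝ) ≤ 1 / 2 by norm_num) (show (0 : ℝ) ≤ 1 / 2 by norm_num) (by norm_num)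
      simp only [smul_eq_mul] at this
      rwa [show 1 / 2 * ((n : ℝ) - k) + 1 / 2 * (n + 2 - k) = n + 1 - k by ring] at this
    simp only [caputoCoeff, if_neg hk₀.ne']
    linarith

theorem ConvexOn.one_add_mul_map_le {η : ℝ → ℝ} (hη : ConvexOn ℝ Set.univ η) {lam x y z : ℝ}
    (hlam : 0 ≤ lam) (h : (1 + lam) * y = x + lam * z) :
    (1 + lam) * η y ≤ η x + lam * η z := by
  have hpos : 0 < 1 + lam := by linarith
  have hy : (1 / (1 + lam)) • x + (lam / (1 + lam)) • z = y := by
    rw [smul_eq_mul, smul_eq_mul, eq_comm, ← mul_right_inj' hpos.ne', h]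
    field_simp
  have hconv : η y ≤ 1 / (1 + lam) * η x + lam / (1 + lam) * η z := by
    have := hη.2 (Set.mem_univ x) (Set.mem_univ z) (show 0 ≤ 1 / (1 + lam) by positivity)
      (show 0 ≤ lam / (1 + lam) by positivity) (by field_simp)
    rwa [hy] at this
  calc (1 + lam) * η y ≤ (1 + lam) * (1 / (1 + lam) * η x + lam / (1 + lam) * η z) := by gcongr
    _ = η x + lam * η z := by field_simp

theorem le_initial_of_succ_le_convexComb {E : ℕ → ℝ} {w : ℕ → ℕ → ℝ}
    (hw₀ : ∀ n, ∀ k ≤ n, 0 ≤ w n k) (hw₁ : ∀ n, ∑ k ∈ range (n + 1), w n k = 1)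
    (hE : ∀ n, E (n + 1) ≤ ∑ k ∈ range (n + 1), w n k * E k) (n : ℕ) : E n ≤ E 0 := by
  induction n using Nat.strong_induction_on with
  | _ n ih =>
    cases n with
    | zero => rfl
    | succ n =>
      calc E (n + 1) ≤ ∑ k ∈ range (n + 1), w n k * E k := hE n
        _ ≤ ∑ k ∈ range (n + 1), w n k * E 0 := by
          refine sum_le_sum fun k hk => ?_
          have hkn := mem_range_succ_iff.1 hk
          exact mul_le_mul_of_nonneg_left (ih k (by omega)) (hw₀ n k hkn)
        _ = E 0 := by rw [← sum_mul, hw₁, one_mul]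

namespace SolvesImplicitAdvection

variable {α lam : ℝ} {U : ℕ → ℤ → ℝ} {η : ℝ → ℝ}

theorem one_add_mul_map_succ_le (hU : SolvesImplicitAdvection α lam U) (hα₀ : 0 ≤ α) (hα₁ : α < 1)
    (hlam : 0 ≤ lam) (hη : ConvexOn ℝ Set.univ η) (n : ℕ) (j : ℤ) :
    (1 + lam) * η (U (n + 1) j) ≤
      ∑ k ∈ range (n + 1), caputoCoeff α n k * η (U k j) + lam * η (U (n + 1) (j - 1)) := by
  have hjensen := hη.map_sum_le (t := range (n + 1)) (w := caputoCoeff α n) (p := (U · j))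
    (fun k hk => caputoCoeff_nonneg hα₀ hα₁.le (mem_range_succ_iff.1 hk))
    (sum_caputoCoeff hα₁.ne n) (fun _ _ => Set.mem_univ _)
  simp only [smul_eq_mul] at hjensen
  have := hη.one_add_mul_map_le hlam
    (show (1 + lam) * U (n + 1) j = ∑ k ∈ range (n + 1), caputoCoeff α n k * U k j
      + lam * U (n + 1) (j - 1) by linarith [hU n j])
  linarith

theorem entropy_succ_le (hU : SolvesImplicitAdvection α lam U) (hα₀ : 0 ≤ α) (hα₁ : α < 1)
    (hlam : 0 ≤ lam) (hη : ConvexOn ℝ Set.univ η)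
    (hsum : ∀ n : ℕ, Summable fun j : ℤ => η (U n j)) (n : ℕ) :
    ∑' j : ℤ, η (U (n + 1) j) ≤ ∑ k ∈ range (n + 1), caputoCoeff α n k * ∑' j : ℤ, η (U k j) := by
  have hpast : ∀ k ∈ range (n + 1), Summable fun j : ℤ => caputoCoeff α n k * η (U k j) :=
    fun k _ => (hsum k).mul_left _
  have hleft : Summable fun j : ℤ => η (U (n + 1) (j - 1)) :=
    (Equiv.subRight 1).summable_iff.2 (hsum (n + 1))
  have hshift : ∑' j : ℤ, η (U (n + 1) (j - 1)) = ∑' j : ℤ, η (U (n + 1) j) :=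
    (Equiv.subRight 1).tsum_eq fun j => η (U (n + 1) j)
  have := Summable.tsum_le_tsum (hU.one_add_mul_map_succ_le hα₀ hα₁ hlam hη n)
    ((hsum (n + 1)).mul_left _) ((summable_sum hpast).add (hleft.mul_left lam))
  rw [tsum_mul_left, Summable.tsum_add (summable_sum hpast) (hleft.mul_left lam),
    Summable.tsum_finsetSum hpast, tsum_mul_left, hshift] at this
  simp only [tsum_mul_left] at this
  linarith

end SolvesImplicitAdvection

theorem implicit_advection_entropy_decay_general (α τ h a : ℝ)
    (hα : α ∈ Set.Ioo (0 : ℝ) 1) (hτ : 0 < τ) (hh : 0 < h) (ha : 0 < a)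
    (lam : ℝ) (hlam : lam = a * τ ^ α / (h * Real.Gamma (2 - α)))
    (U : ℕ → ℤ → ℝ) (hU : SolvesImplicitAdvection α lam U)
    (η : ℝ → ℝ) (hη : ConvexOn ℝ Set.univ η)
    (hsum : ∀ n : ℕ, Summable (fun j : ℤ => η (U n j))) :
    ∀ n : ℕ, ∑' j : ℤ, η (U n j) ≤ ∑' j : ℤ, η (U 0 j) := by
  have hlam₀ : 0 ≤ lam := by
    have hΓ : 0 ≤ Real.Gamma (2 - α) := Real.Gamma_nonneg_of_nonneg (by linarith [hα.2])
    rw [hlam]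
    exact div_nonneg (by positivity) (mul_nonneg hh.le hΓ)
  exact le_initial_of_succ_le_convexComb
    (fun n k hk => caputoCoeff_nonneg hα.1.le hα.2.le hk) (sum_caputoCoeff hα.2.ne)
    (hU.entropy_succ_le hα.1.le hα.2 hlam₀ hη hsum)

/-- the discrete entropy does not increase in time for the implicit
upwind scheme for linear advection: for convex nonnegative `η`,
`Σ_j η(U^n_j) ≤ Σ_j η(U^0_j)` for every `n`. -/
theorem implicit_advection_entropy_decay (α τ h a : ℝ)
    (hα : α ∈ Set.Ioo (0 : ℝ) 1) (hτ : 0 < τ) (hh : 0 < h) (ha : 0 < a)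
    (lam : ℝ) (hlam : lam = a * τ ^ α / (h * Real.Gamma (2 - α)))
    (U : ℕ → ℤ → ℝ) (hU : SolvesImplicitAdvection α lam U)
    (η : ℝ → ℝ) (hη : ConvexOn ℝ Set.univ η) (hη0 : ∀ x, 0 ≤ η x)
    (hsum : ∀ n : ℕ, Summable (fun j : ℤ => η (U n j))) :
    ∀ n : ℕ, ∑' j : ℤ, η (U n j) ≤ ∑' j : ℤ, η (U 0 j) :=
  implicit_advection_entropy_decay_general α τ h a hα hτ hh ha lam hlam U hU η hη hsum
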